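/- arXiv:1303.3236 — 8 statements merged into one kernel-verified Lean document; each statement's English description precedes it below -/
import Mathlib

section
/- Let A_n denote the number of quarter-plane walks of length n with steps from 𝒜 = {(−1,1),(1,1),(1,−1)}. Then there exist a real constant κ > 0 and a constant C > 0 such that for all n ≥ 0, |A_n − κ·3^n| ≤ C·(2√2)^n. -/
/-!
Let `T` be the transfer operator of the walk killed on leaving the quadrant, so that
`A n = (Tⁿ 1) 0`. Since `T 1 ≤ 3`, the ratios `A n / 3ⁿ` decrease. The potential
`φ (x, y) = √2 ^ (-x) + √2 ^ (-y)` satisfies `∑ s ∈ 𝒜, φ (p + s) = 2√2 φ p ≤ 3 φ p` and `φ ≥ 1`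
off the quadrant, so at most `3ᵐ φ p` of the `3ᵐ` step sequences of length `m` started at `p` leave
the quadrant (gambler's ruin). Summing over the walks of length `n`,
`3ᵐ A n ≤ A (n + m) + 3ᵐ (Tⁿ φ) 0 ≤ A (n + m) + 3ᵐ (2√2)ⁿ φ 0`, so `A n / 3ⁿ` converges to its
infimum `κ` at rate `(2√2 / 3)ⁿ`; and `κ > 0` because `φ (4, 4) = 1 / 2`, so at least half of
all step sequences started at `(4, 4)` stay in the quadrant.
-/

/-- The number of quarter-plane walks of length `n` with steps from `S`:
sequences of `n` steps, each in `S`, all of whose partial sums have both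
coordinates nonnegative. -/
noncomputable def quarterPlaneWalks (S : Finset (ℤ × ℤ)) (n : ℕ) : ℕ :=
  Nat.card {f : Fin n → ℤ × ℤ //
    (∀ k, f k ∈ S) ∧
    ∀ k : Fin n, 0 ≤ ∑ j ∈ Finset.Iic k, (f j).1 ∧ 0 ≤ ∑ j ∈ Finset.Iic k, (f j).2}

open Finset

theorem Fin.sum_Iic_succ {M : Type*} [AddCommMonoid M] {n : ℕ} (f : Fin (n + 1) → M)
    (k : Fin n) : ∑ j ∈ Iic k.succ, f j = f 0 + ∑ j ∈ Iic k, f j.succ := by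
  rw [← Icc_bot, bot_eq_zero, Icc_eq_cons_Ioc (Fin.zero_le _), Finset.sum_cons,
    ← Fin.map_succEmb_Iic, sum_map]
  rfl

def IsQuadrantWalk (S : Finset (ℤ × ℤ)) (p : ℤ × ℤ) {n : ℕ} (f : Fin n → ℤ × ℤ) : Prop :=
  (∀ k, f k ∈ S) ∧ ∀ k, 0 ≤ p + ∑ j ∈ Iic k, f j

theorem isQuadrantWalk_cons {S : Finset (ℤ × ℤ)} {p s : ℤ × ℤ} {n : ℕ} {f : Fin n → ℤ × ℤ} :
    IsQuadrantWalk S p (Fin.cons s f : Fin (n + 1) → ℤ × ℤ) ↔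
      (s ∈ S ∧ 0 ≤ p + s) ∧ IsQuadrantWalk S (p + s) f := by
  simp only [IsQuadrantWalk, Fin.forall_fin_succ, Fin.sum_Iic_succ, Fin.cons_zero, Fin.cons_succ,
    ← add_assoc, show Iic (0 : Fin (n + 1)) = {0} from Iic_bot, sum_singleton]
  tauto

theorem quarterPlaneWalks_eq_card (S : Finset (ℤ × ℤ)) (n : ℕ) :
    quarterPlaneWalks S n = Nat.card {f : Fin n → ℤ × ℤ // IsQuadrantWalk S 0 f} := by
  refine Nat.card_congr (Equiv.subtypeEquivRight fun f => ?_)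
  simp [IsQuadrantWalk, Prod.le_def, Prod.fst_sum, Prod.snd_sum]

def quadrantStep (S : Finset (ℤ × ℤ)) : Module.End ℝ (ℤ × ℤ → ℝ) where
  toFun f p := ∑ s ∈ S with 0 ≤ p + s, f (p + s)
  map_add' f g := by ext p; simp [sum_add_distrib]
  map_smul' c f := by ext p; simp [mul_sum]

theorem quadrantStep_apply (S : Finset (ℤ × ℤ)) (f : ℤ × ℤ → ℝ) (p : ℤ × ℤ) :
    quadrantStep S f p = ∑ s ∈ S with 0 ≤ p + s, f (p + s) := rfl

def quadrantWalksConsEquiv (S : Finset (ℤ × ℤ)) (p : ℤ × ℤ) (n : ℕ) :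
    {f : Fin (n + 1) → ℤ × ℤ // IsQuadrantWalk S p f} ≃
      Σ s : S.filter (0 ≤ p + ·), {f : Fin n → ℤ × ℤ // IsQuadrantWalk S (p + s) f} where
  toFun f := by
    have h := isQuadrantWalk_cons.1 (Fin.cons_self_tail f.1 ▸ f.2)
    exact ⟨⟨f.1 0, mem_filter.2 h.1⟩, ⟨Fin.tail f.1, h.2⟩⟩
  invFun g := ⟨Fin.cons g.1 g.2.1, isQuadrantWalk_cons.2 ⟨mem_filter.1 g.1.2, g.2.2⟩⟩
  left_inv f := Subtype.ext (Fin.cons_self_tail f.1)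
  right_inv g := rfl

instance (S : Finset (ℤ × ℤ)) (p : ℤ × ℤ) (n : ℕ) :
    Finite {f : Fin n → ℤ × ℤ // IsQuadrantWalk S p f} :=
  Finite.of_injective (fun f k => (⟨f.1 k, f.2.1 k⟩ : S))
    fun _ _ h => Subtype.ext (funext fun k => congrArg Subtype.val (congrFun h k))

theorem card_isQuadrantWalk (S : Finset (ℤ × ℤ)) (n : ℕ) (p : ℤ × ℤ) :
    (Nat.card {f : Fin n → ℤ × ℤ // IsQuadrantWalk S p f} : ℝ) = (quadrantStep S ^ n) 1 p := by
  induction n generalizing p with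
  | zero =>
    simp [IsQuadrantWalk]
  | succ n ih =>
    rw [Nat.card_congr (quadrantWalksConsEquiv S p n), Nat.card_sigma, pow_succ',
      Module.End.mul_apply, quadrantStep_apply, Nat.cast_sum]
    simp only [ih]
    exact sum_coe_sort _ fun s => (quadrantStep S ^ n) 1 (p + s)

theorem quarterPlaneWalks_eq_quadrantStep_pow (S : Finset (ℤ × ℤ)) (n : ℕ) :
    (quarterPlaneWalks S n : ℝ) = (quadrantStep S ^ n) 1 0 := by
  rw [quarterPlaneWalks_eq_card, card_isQuadrantWalk]

section QuadrantStep

variable {S : Finset (ℤ × ℤ)}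

theorem quadrantStep_mono {f g : ℤ × ℤ → ℝ} (h : ∀ q, 0 ≤ q → f q ≤ g q) (p : ℤ × ℤ) :
    quadrantStep S f p ≤ quadrantStep S g p :=
  sum_le_sum fun _ hs => h _ (mem_filter.1 hs).2

theorem quadrantStep_pow_mono {f g : ℤ × ℤ → ℝ} (h : ∀ q, 0 ≤ q → f q ≤ g q) (n : ℕ)
    {p : ℤ × ℤ} (hp : 0 ≤ p) : (quadrantStep S ^ n) f p ≤ (quadrantStep S ^ n) g p := by
  induction n generalizing f g with
  | zero => exact h p hp
  | succ n ih =>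
    rw [pow_succ, Module.End.mul_apply, Module.End.mul_apply]
    exact ih fun q _ => quadrantStep_mono h q

theorem quadrantStep_apply_le_sum {φ : ℤ × ℤ → ℝ} (hφ : ∀ q, ¬ 0 ≤ q → 0 ≤ φ q) (p : ℤ × ℤ) :
    quadrantStep S φ p ≤ ∑ s ∈ S, φ (p + s) :=
  sum_le_sum_of_subset_of_nonneg (filter_subset _ _)
    fun _ hs hs' => hφ _ fun h => hs' (mem_filter.2 ⟨hs, h⟩)

theorem quadrantStep_pow_apply_le {φ : ℤ × ℤ → ℝ} {c : ℝ} (hc : 0 ≤ c)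
    (hφ : ∀ p, 0 ≤ p → quadrantStep S φ p ≤ c * φ p) (n : ℕ) {p : ℤ × ℤ} (hp : 0 ≤ p) :
    (quadrantStep S ^ n) φ p ≤ c ^ n * φ p := by
  induction n with
  | zero => simp
  | succ n ih =>
    calc (quadrantStep S ^ (n + 1)) φ p = (quadrantStep S ^ n) (quadrantStep S φ) p := by
          rw [pow_succ, Module.End.mul_apply]
      _ ≤ (quadrantStep S ^ n) (c • φ) p := quadrantStep_pow_mono hφ n hp
      _ ≤ c ^ (n + 1) * φ p := by
          rw [map_smul, Pi.smul_apply, smul_eq_mul, pow_succ', mul_assoc]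
          exact mul_le_mul_of_nonneg_left ih hc

theorem apply_add_nsmul_le_quadrantStep_pow {f : ℤ × ℤ → ℝ} (hf : ∀ q, 0 ≤ q → 0 ≤ f q)
    {s : ℤ × ℤ} (hs : s ∈ S) (hs₀ : 0 ≤ s) (k : ℕ) {p : ℤ × ℤ} (hp : 0 ≤ p) :
    f (p + k • s) ≤ (quadrantStep S ^ k) f p := by
  induction k generalizing f with
  | zero => simp
  | succ k ih =>
    have hTf : ∀ q, 0 ≤ q → 0 ≤ quadrantStep S f q := fun q _ =>
      (map_zero (quadrantStep S) ▸ quadrantStep_mono hf q :)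
    have hq : 0 ≤ p + k • s + s := add_nonneg (add_nonneg hp (nsmul_nonneg hs₀ k)) hs₀
    calc f (p + (k + 1) • s) = f (p + k • s + s) := by rw [succ_nsmul, add_assoc]
      _ ≤ quadrantStep S f (p + k • s) :=
          single_le_sum (fun t ht => hf _ (mem_filter.1 ht).2) (mem_filter.2 ⟨hs, hq⟩)
      _ ≤ (quadrantStep S ^ (k + 1)) f p := by
          rw [pow_succ, Module.End.mul_apply]
          exact ih hTf

theorem pow_mul_one_sub_le_quadrantStep_pow {φ : ℤ × ℤ → ℝ} (hφ₀ : ∀ q, 0 ≤ q → 0 ≤ φ q)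
    (hφ₁ : ∀ q, ¬ 0 ≤ q → 1 ≤ φ q) (hφ : ∀ p, 0 ≤ p → ∑ s ∈ S, φ (p + s) ≤ #S * φ p)
    (m : ℕ) {p : ℤ × ℤ} (hp : 0 ≤ p) : (#S : ℝ) ^ m * (1 - φ p) ≤ (quadrantStep S ^ m) 1 p := by
  have hstep : ∀ p, 0 ≤ p → quadrantStep S (φ - 1) p ≤ #S * (φ - 1) p := fun p hp =>
    calc quadrantStep S (φ - 1) p ≤ ∑ s ∈ S, (φ - 1) (p + s) :=
          quadrantStep_apply_le_sum (fun q hq => sub_nonneg.2 (hφ₁ q hq)) p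
      _ = ∑ s ∈ S, φ (p + s) - #S := by simp [sum_sub_distrib]
      _ ≤ #S * (φ - 1) p := by simp only [Pi.sub_apply, Pi.one_apply]; linarith [hφ p hp]
  calc (#S : ℝ) ^ m * (1 - φ p) = -(#S ^ m * (φ - 1) p) := by
        rw [Pi.sub_apply, Pi.one_apply]; ring
    _ ≤ -(quadrantStep S ^ m) (φ - 1) p :=
        neg_le_neg (quadrantStep_pow_apply_le (Nat.cast_nonneg _) hstep m hp)
    _ = (quadrantStep S ^ m) (1 - φ) p := by rw [← neg_sub, map_neg, Pi.neg_apply, neg_neg]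
    _ ≤ (quadrantStep S ^ m) 1 p :=
        quadrantStep_pow_mono (fun q hq => sub_le_self _ (hφ₀ q hq)) m hp

variable (S) in
theorem quarterPlaneWalks_add_le (n m : ℕ) :
    (quarterPlaneWalks S (n + m) : ℝ) ≤ #S ^ m * quarterPlaneWalks S n := by
  have hstep : ∀ p, 0 ≤ p → quadrantStep S 1 p ≤ #S * (1 : ℤ × ℤ → ℝ) p := fun p _ => by
    simpa [quadrantStep_apply] using (card_filter_le S _ : _ ≤ #S)
  rw [quarterPlaneWalks_eq_quadrantStep_pow, quarterPlaneWalks_eq_quadrantStep_pow, pow_add,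
    Module.End.mul_apply, ← smul_eq_mul, ← Pi.smul_apply _ ((quadrantStep S ^ n) 1), ← map_smul]
  refine quadrantStep_pow_mono (fun q hq => ?_) n le_rfl
  simpa using quadrantStep_pow_apply_le (Nat.cast_nonneg _) hstep m hq

theorem pow_mul_quarterPlaneWalks_le_add {φ : ℤ × ℤ → ℝ} (hφ₀ : ∀ q, 0 ≤ φ q)
    (hφ₁ : ∀ q, ¬ 0 ≤ q → 1 ≤ φ q) {c : ℝ} (hc₀ : 0 ≤ c) (hcS : c ≤ #S)
    (hφ : ∀ p, 0 ≤ p → ∑ s ∈ S, φ (p + s) ≤ c * φ p) (n m : ℕ) :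
    #S ^ m * (quarterPlaneWalks S n : ℝ) ≤
      quarterPlaneWalks S (n + m) + #S ^ m * (φ 0 * c ^ n) := by
  have hescape : ∀ q, 0 ≤ q → ((#S : ℝ) ^ m • (1 - φ)) q ≤ (quadrantStep S ^ m) 1 q :=
    fun q hq => pow_mul_one_sub_le_quadrantStep_pow (fun q _ => hφ₀ q) hφ₁
      (fun p hp => (hφ p hp).trans (mul_le_mul_of_nonneg_right hcS (hφ₀ p))) m hq
  have hT : ∀ p, 0 ≤ p → quadrantStep S φ p ≤ c * φ p := fun p hp =>
    (quadrantStep_apply_le_sum (fun q _ => hφ₀ q) p).trans (hφ p hp)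
  rw [quarterPlaneWalks_eq_quadrantStep_pow, quarterPlaneWalks_eq_quadrantStep_pow, pow_add,
    Module.End.mul_apply]
  calc (#S : ℝ) ^ m * (quadrantStep S ^ n) 1 0
      = (quadrantStep S ^ n) ((#S : ℝ) ^ m • (1 - φ)) 0 + #S ^ m * (quadrantStep S ^ n) φ 0 := by
        rw [map_smul, map_sub, Pi.smul_apply, Pi.sub_apply, smul_eq_mul]; ring
    _ ≤ (quadrantStep S ^ n) ((quadrantStep S ^ m) 1) 0 + #S ^ m * (φ 0 * c ^ n) := by
        rw [mul_comm (φ 0)]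
        exact add_le_add (quadrantStep_pow_mono hescape n le_rfl)
          (mul_le_mul_of_nonneg_left (quadrantStep_pow_apply_le hc₀ hT n le_rfl) (by positivity))

theorem pow_mul_one_sub_le_quarterPlaneWalks_add {φ : ℤ × ℤ → ℝ} (hφ₀ : ∀ q, 0 ≤ q → 0 ≤ φ q)
    (hφ₁ : ∀ q, ¬ 0 ≤ q → 1 ≤ φ q) (hφ : ∀ p, 0 ≤ p → ∑ s ∈ S, φ (p + s) ≤ #S * φ p)
    {s : ℤ × ℤ} (hs : s ∈ S) (hs₀ : 0 ≤ s) (k m : ℕ) :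
    (#S : ℝ) ^ m * (1 - φ (k • s)) ≤ quarterPlaneWalks S (k + m) := by
  have hpos : ∀ q, 0 ≤ q → 0 ≤ (quadrantStep S ^ m) 1 q := fun q hq => by
    simpa using quadrantStep_pow_mono (S := S) (f := 0) (g := 1) (fun _ _ => zero_le_one) m hq
  rw [quarterPlaneWalks_eq_quadrantStep_pow, pow_add, Module.End.mul_apply]
  calc (#S : ℝ) ^ m * (1 - φ (k • s)) ≤ (quadrantStep S ^ m) 1 (k • s) :=
        pow_mul_one_sub_le_quadrantStep_pow hφ₀ hφ₁ hφ m (nsmul_nonneg hs₀ k)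
    _ ≤ (quadrantStep S ^ k) ((quadrantStep S ^ m) 1) 0 := by
        simpa using apply_add_nsmul_le_quadrantStep_pow hpos hs hs₀ k le_rfl

end QuadrantStep

section AlmostGeometric

variable {u e : ℕ → ℝ} {b : ℝ}

theorem antitone_div_pow_of_add_le (hb : 0 < b) (hle : ∀ n m, u (n + m) ≤ b ^ m * u n) :
    Antitone fun n => u n / b ^ n :=
  antitone_nat_of_succ_le fun n => by
    rw [div_le_div_iff₀ (by positivity) (by positivity), pow_succ]
    nlinarith [hle n 1, pow_pos hb n]

theorem abs_sub_iInf_div_pow_mul_pow_le (hb : 0 < b) (hu : ∀ n, 0 ≤ u n)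
    (hle : ∀ n m, u (n + m) ≤ b ^ m * u n) (hge : ∀ n m, b ^ m * u n ≤ u (n + m) + b ^ m * e n)
    (n : ℕ) : |u n - (⨅ k, u k / b ^ k) * b ^ n| ≤ e n := by
  set a : ℕ → ℝ := fun k => u k / b ^ k
  have hbn : 0 < b ^ n := pow_pos hb n
  have hupper : ⨅ k, a k ≤ a n :=
    ciInf_le ⟨0, Set.forall_mem_range.2 fun k => div_nonneg (hu k) (pow_pos hb k).le⟩ n
  have hlower : a n - e n / b ^ n ≤ ⨅ k, a k := le_ciInf fun k => by
    have h := hge n k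
    calc a n - e n / b ^ n = (b ^ k * u n - b ^ k * e n) / b ^ (n + k) := by
          simp only [a]; rw [pow_add]; field_simp
      _ ≤ a (n + k) := div_le_div_of_nonneg_right (by linarith) (pow_pos hb _).le
      _ ≤ a k := antitone_div_pow_of_add_le hb hle (Nat.le_add_left k n)
  have hun : u n = a n * b ^ n := by simp only [a]; field_simp
  rw [hun, ← sub_mul, abs_of_nonneg (mul_nonneg (sub_nonneg.2 hupper) hbn.le)]
  calc (a n - ⨅ k, a k) * b ^ n ≤ e n / b ^ n * b ^ n := by gcongr; linarith
    _ = e n := div_mul_cancel₀ _ hbn.ne'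

theorem iInf_div_pow_pos (hb : 0 < b) (hle : ∀ n m, u (n + m) ≤ b ^ m * u n) {N : ℕ} {c : ℝ}
    (hc : 0 < c) (hN : ∀ m, b ^ m * c ≤ u (N + m)) : 0 < ⨅ k, u k / b ^ k := by
  refine (div_pos hc (pow_pos hb N)).trans_le (le_ciInf fun k => ?_)
  calc c / b ^ N = b ^ k * c / b ^ (N + k) := by
        rw [pow_add]; field_simp
    _ ≤ u (N + k) / b ^ (N + k) := by gcongr; exact hN k
    _ ≤ u k / b ^ k := antitone_div_pow_of_add_le hb hle (Nat.le_add_left k N)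

end AlmostGeometric

notation "𝒜" => ({(-1, 1), (1, 1), (1, -1)} : Finset (ℤ × ℤ))

/-- For the one-dimensional steps `-1, +1, +1`, `x ↦ r ^ (-x)` has eigenvalue `r + 2 / r`, which
`r = √2` minimizes, at `2√2`. -/
noncomputable def potentialA (p : ℤ × ℤ) : ℝ := √2 ^ (-p.1) + √2 ^ (-p.2)

theorem potentialA_nonneg (p : ℤ × ℤ) : 0 ≤ potentialA p := by
  unfold potentialA; positivity

theorem one_le_potentialA {q : ℤ × ℤ} (hq : ¬ 0 ≤ q) : 1 ≤ potentialA q := by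
  have h1 : (1 : ℝ) ≤ √2 := Real.one_le_sqrt.2 one_le_two
  rw [Prod.le_def, not_and_or, Prod.fst_zero, Prod.snd_zero] at hq
  unfold potentialA
  have h₀ (z : ℤ) : (0 : ℝ) ≤ √2 ^ z := zpow_nonneg (Real.sqrt_nonneg 2) z
  rcases hq with hq | hq
  · linarith [one_le_zpow₀ h1 (by omega : (0 : ℤ) ≤ -q.1), h₀ (-q.2)]
  · linarith [one_le_zpow₀ h1 (by omega : (0 : ℤ) ≤ -q.2), h₀ (-q.1)]

theorem sum_potentialA (p : ℤ × ℤ) :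
    ∑ s ∈ 𝒜, potentialA (p + s) = 2 * √2 * potentialA p := by
  have hr : (√2 : ℝ) ≠ 0 := by positivity
  have hsq : (√2 : ℝ) ^ 2 = 2 := Real.sq_sqrt zero_le_two
  simp only [potentialA]
  rw [sum_insert (by decide), sum_insert (by decide), sum_singleton]
  simp only [Prod.fst_add, Prod.snd_add, neg_add, zpow_add₀ hr, neg_neg, zpow_one, zpow_neg_one]
  field_simp
  linear_combination -(√2 ^ (-p.1) + √2 ^ (-p.2)) * hsq

theorem potentialA_zero : potentialA 0 = 2 := by
  norm_num [potentialA]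

theorem potentialA_four_smul : potentialA (4 • (1, 1)) = 1 / 2 := by
  have h : (√2 : ℝ) ^ 4 = 4 := by
    rw [show 4 = 2 * 2 from rfl, pow_mul, Real.sq_sqrt zero_le_two]; norm_num
  norm_num [potentialA, h]

theorem modelA_asymptotics :
    ∃ κ C : ℝ, 0 < κ ∧ 0 < C ∧ ∀ n : ℕ,
      |(quarterPlaneWalks ({(-1,1),(1,1),(1,-1)} : Finset (ℤ × ℤ)) n : ℝ) - κ * 3 ^ n| ≤
        C * (2 * Real.sqrt 2) ^ n := by
  have hcard : (#𝒜 : ℝ) = 3 := by norm_num [show #𝒜 = 3 from rfl]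
  have hc : 2 * √2 ≤ 3 := by nlinarith [Real.sq_sqrt zero_le_two, Real.sqrt_nonneg 2]
  have hsum : ∀ p, 0 ≤ p → ∑ s ∈ 𝒜, potentialA (p + s) ≤ #𝒜 * potentialA p := fun p _ => by
    rw [sum_potentialA, hcard]; exact mul_le_mul_of_nonneg_right hc (potentialA_nonneg p)
  have hle := quarterPlaneWalks_add_le 𝒜
  have hge := pow_mul_quarterPlaneWalks_le_add potentialA_nonneg (fun _ => one_le_potentialA)
    (by positivity) (hcard ▸ hc) fun p _ => (sum_potentialA p).le
  have hlow := pow_mul_one_sub_le_quarterPlaneWalks_add (fun q _ => potentialA_nonneg q)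
    (fun _ => one_le_potentialA) hsum (by decide : ((1, 1) : ℤ × ℤ) ∈ 𝒜) (by decide) 4
  rw [hcard] at hle hge hlow
  rw [potentialA_zero] at hge
  rw [potentialA_four_smul] at hlow
  refine ⟨⨅ k, (quarterPlaneWalks 𝒜 k : ℝ) / 3 ^ k, 2,
    iInf_div_pow_pos three_pos hle (by norm_num) hlow, two_pos, fun n => ?_⟩
  exact abs_sub_iInf_div_pow_mul_pow_le three_pos (fun n => Nat.cast_nonneg _) hle hge n
end

section
/- Let C_n denote the number of quarter-plane walks of length n with steps from 𝒞 = {(−1,1),(0,1),(1,1),(1,0),(1,−1)}. Then there exist a real constant κ > 0 and a constant C > 0 such that for all n ≥ 0, |C_n − κ·5^n| ≤ C·(1+2√3)^n. -/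
/-!
Write `p n = C n / 5 ^ n`. Deleting the last step shows that `p` is antitone. Conversely, a
quarter-plane walk of length `n` followed by any step fails to be a quarter-plane walk only if
one coordinate of its endpoint is negative, and by the exponential Markov bound with weight
`√3 ^ (-x)` per step (whose sum over `𝒞` is `1 + 2√3` for either coordinate) at most
`2 (1 + 2√3) ^ (n + 1) / √3` words of length `n + 1` do that. Hence `p n - p (n + 1)` decays
geometrically with ratio `(1 + 2√3) / 5 < 1`, and `p` converges to some `κ` at that rate.

For `κ > 0`: in each coordinate the steps are `≥ -1` and `∑ 3 ^ (-x) = 5`, so `3 ^ (-S)`, with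
`S` the partial sum stopped at its first negative value `-1`, has constant mean over uniform
words; it equals `3` on walks that exit, so each coordinate exits on at most a third of the
`5 ^ n` words, and `p n ≥ 1 / 3`.
-/

open Finset

namespace LatticeWalk

lemma zpow_sum₀ {ι : Type*} {t : ℝ} (ht : t ≠ 0) (s : Finset ι) (g : ι → ℤ) :
    t ^ (∑ i ∈ s, g i) = ∏ i ∈ s, t ^ g i := by
  classical
  induction s using Finset.cons_induction with
  | empty => simp
  | cons a s ha ih => rw [sum_cons, prod_cons, zpow_add₀ ht, ih]

lemma sum_fin_succ_fun_eq_sum_snoc {α M : Type*} [Fintype α] [AddCommMonoid M] {n : ℕ}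
    (F : (Fin (n + 1) → α) → M) :
    ∑ f, F f = ∑ g : Fin n → α, ∑ a, F (Fin.snoc g a) := by
  rw [← (Fin.snocEquiv fun _ => α).sum_comp, Fintype.sum_prod_type, sum_comm]
  rfl

section HalfLine

variable {α : Type*} {n : ℕ}

def partialSum (φ : α → ℤ) (f : Fin n → α) (k : Fin n) : ℤ := ∑ j ∈ Iic k, φ (f j)

def ExitsHalfLine (φ : α → ℤ) (f : Fin n → α) : Prop := ∃ k, partialSum φ f k < 0

instance (φ : α → ℤ) : DecidablePred (ExitsHalfLine (n := n) φ) :=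
  fun f => inferInstanceAs (Decidable (∃ k, partialSum φ f k < 0))

lemma partialSum_castSucc (φ : α → ℤ) (f : Fin (n + 1) → α) (k : Fin n) :
    partialSum φ f k.castSucc = partialSum φ (Fin.init f) k :=
  Fin.sum_Iic_castSucc _ k

lemma partialSum_last (φ : α → ℤ) (f : Fin (n + 1) → α) :
    partialSum φ f (Fin.last n) = ∑ j, φ (f j) := by
  rw [partialSum, ← Fin.top_eq_last, Iic_top]

lemma exitsHalfLine_iff_init (φ : α → ℤ) (f : Fin (n + 1) → α) :
    ExitsHalfLine φ f ↔ ExitsHalfLine φ (Fin.init f) ∨ ∑ j, φ (f j) < 0 := by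
  simp only [ExitsHalfLine, Fin.exists_fin_succ', partialSum_castSucc, partialSum_last]

lemma sum_snoc (φ : α → ℤ) (g : Fin n → α) (a : α) :
    ∑ j, φ (Fin.snoc (α := fun _ => α) g a j) = ∑ j, φ (g j) + φ a := by
  simp [Fin.sum_univ_castSucc]

lemma sum_nonneg_of_not_exitsHalfLine {φ : α → ℤ} {f : Fin n → α}
    (h : ¬ ExitsHalfLine φ f) :
    0 ≤ ∑ j, φ (f j) := by
  cases n with
  | zero => simp
  | succ n => simpa [partialSum_last] using not_exists.1 h (Fin.last n)

noncomputable def ruinWeight (φ : α → ℤ) (t : ℝ) (f : Fin n → α) : ℝ :=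
  if ExitsHalfLine φ f then t else t ^ (-∑ j, φ (f j))

variable {φ : α → ℤ} {t : ℝ}

lemma ruinWeight_nonneg (ht : 0 ≤ t) (f : Fin n → α) : 0 ≤ ruinWeight φ t f := by
  unfold ruinWeight; split_ifs <;> positivity

lemma ruinWeight_snoc (hφ : ∀ a, -1 ≤ φ a) {g : Fin n → α} (hg : ¬ ExitsHalfLine φ g)
    (a : α) :
    ruinWeight φ t (Fin.snoc g a) = t ^ (-(∑ j, φ (g j) + φ a)) := by
  rw [ruinWeight, sum_snoc, ite_eq_right_iff]
  intro h
  have hlast := ((exitsHalfLine_iff_init φ _).1 h).resolve_left (by simpa using hg)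
  rw [sum_snoc] at hlast
  have hexit : ∑ j, φ (g j) + φ a = -1 := by
    linarith [sum_nonneg_of_not_exitsHalfLine hg, hφ a]
  simp [hexit]

variable [Fintype α]

lemma card_sum_neg_mul_le_pow (ht : 1 ≤ t) (n : ℕ) :
    #{f : Fin n → α | ∑ j, φ (f j) < 0} * t ≤ (∑ a, t ^ (-φ a)) ^ n := by
  have ht₀ : t ≠ 0 := by positivity
  calc (#{f : Fin n → α | ∑ j, φ (f j) < 0} : ℝ) * t
      = ∑ f ∈ {f : Fin n → α | ∑ j, φ (f j) < 0}, t := by rw [sum_const, nsmul_eq_mul]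
    _ ≤ ∑ f ∈ {f : Fin n → α | ∑ j, φ (f j) < 0}, t ^ (-∑ j, φ (f j)) := by
      refine sum_le_sum fun f hf => ?_
      have hneg : ∑ j, φ (f j) < 0 := (mem_filter.1 hf).2
      simpa using zpow_le_zpow_right₀ ht (show 1 ≤ -∑ j, φ (f j) by omega)
    _ ≤ ∑ f : Fin n → α, t ^ (-∑ j, φ (f j)) := sum_le_univ_sum_of_nonneg fun _ => by positivity
    _ = (∑ a, t ^ (-φ a)) ^ n := by
      simp only [Fintype.sum_pow, ← sum_neg_distrib, zpow_sum₀ ht₀]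

lemma sum_ruinWeight_snoc_le (hφ : ∀ a, -1 ≤ φ a) (ht : 0 < t)
    (hsum : ∑ a, t ^ (-φ a) ≤ Fintype.card α) (g : Fin n → α) :
    ∑ a, ruinWeight φ t (Fin.snoc g a) ≤ Fintype.card α * ruinWeight φ t g := by
  by_cases hg : ExitsHalfLine φ g
  · have h : ∀ a, ExitsHalfLine φ (Fin.snoc (α := fun _ => α) g a) := fun a =>
      (exitsHalfLine_iff_init φ _).2 (Or.inl (by simpa using hg))
    simp [ruinWeight, h, hg]
  · simp only [ruinWeight_snoc hφ hg, neg_add, zpow_add₀ ht.ne', ← mul_sum]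
    rw [ruinWeight, if_neg hg, mul_comm (Fintype.card α : ℝ)]
    gcongr

lemma sum_ruinWeight_le (hφ : ∀ a, -1 ≤ φ a) (ht : 0 < t)
    (hsum : ∑ a, t ^ (-φ a) ≤ Fintype.card α) (n : ℕ) :
    ∑ f : Fin n → α, ruinWeight φ t f ≤ Fintype.card α ^ n := by
  induction n with
  | zero => simp [ruinWeight, ExitsHalfLine]
  | succ n ih =>
    calc ∑ f : Fin (n + 1) → α, ruinWeight φ t f
        = ∑ g : Fin n → α, ∑ a, ruinWeight φ t (Fin.snoc g a) := sum_fin_succ_fun_eq_sum_snoc _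
      _ ≤ ∑ g : Fin n → α, Fintype.card α * ruinWeight φ t g :=
        sum_le_sum fun g _ => sum_ruinWeight_snoc_le hφ ht hsum g
      _ = Fintype.card α * ∑ g : Fin n → α, ruinWeight φ t g := (mul_sum ..).symm
      _ ≤ Fintype.card α * Fintype.card α ^ n := by gcongr
      _ = Fintype.card α ^ (n + 1) := (pow_succ' ..).symm

lemma card_exitsHalfLine_mul_le (hφ : ∀ a, -1 ≤ φ a) (ht : 0 < t)
    (hsum : ∑ a, t ^ (-φ a) ≤ Fintype.card α) (n : ℕ) :
    #{f : Fin n → α | ExitsHalfLine φ f} * t ≤ Fintype.card α ^ n :=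
  calc (#{f : Fin n → α | ExitsHalfLine φ f} : ℝ) * t
      = ∑ f ∈ {f : Fin n → α | ExitsHalfLine φ f}, t := by rw [sum_const, nsmul_eq_mul]
    _ = ∑ f ∈ {f : Fin n → α | ExitsHalfLine φ f}, ruinWeight φ t f :=
      sum_congr rfl fun f hf => (if_pos (mem_filter.1 hf).2).symm
    _ ≤ ∑ f, ruinWeight φ t f := sum_le_univ_sum_of_nonneg fun f => ruinWeight_nonneg ht.le f
    _ ≤ Fintype.card α ^ n := sum_ruinWeight_le hφ ht hsum n

end HalfLine

section QuarterPlane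

variable {S : Finset (ℤ × ℤ)} {n : ℕ}

def IsQuarterPlane (f : Fin n → S) : Prop :=
  ¬ ExitsHalfLine (fun s : S => s.1.1) f ∧ ¬ ExitsHalfLine (fun s : S => s.1.2) f

instance : DecidablePred (IsQuarterPlane (S := S) (n := n)) :=
  fun _ => inferInstanceAs (Decidable (_ ∧ _))

lemma isQuarterPlane_iff (f : Fin n → S) :
    IsQuarterPlane f ↔
      ∀ k, 0 ≤ ∑ j ∈ Iic k, (f j).1.1 ∧ 0 ≤ ∑ j ∈ Iic k, (f j).1.2 := by
  simp [IsQuarterPlane, ExitsHalfLine, partialSum, forall_and]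

lemma isQuarterPlane_iff_init (f : Fin (n + 1) → S) :
    IsQuarterPlane f ↔
      IsQuarterPlane (Fin.init f) ∧ 0 ≤ ∑ j, (f j).1.1 ∧ 0 ≤ ∑ j, (f j).1.2 := by
  simp only [IsQuarterPlane, exitsHalfLine_iff_init, not_or, not_lt]
  tauto

variable (S n)

lemma quarterPlaneWalks_eq_card :
    quarterPlaneWalks S n = #{f : Fin n → S | IsQuarterPlane f} := by
  rw [quarterPlaneWalks, ← Fintype.card_subtype, ← Nat.card_eq_fintype_card]
  exact Nat.card_congr
    { toFun := fun f => ⟨fun k => ⟨f.1 k, f.2.1 k⟩, (isQuarterPlane_iff _).2 f.2.2⟩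
      invFun := fun g => ⟨fun k => g.1 k, fun k => (g.1 k).2, (isQuarterPlane_iff _).1 g.2⟩
      left_inv := fun _ => rfl
      right_inv := fun _ => rfl }

lemma card_isQuarterPlane_init :
    #{f : Fin (n + 1) → S | IsQuarterPlane (Fin.init f)} = #S * quarterPlaneWalks S n := by
  have h := card_snocEquiv_filter_piFinset (fun _ => (univ : Finset S)) (IsQuarterPlane (n := n))
  rwa [Fintype.piFinset_univ, Fin.init_def, Fintype.piFinset_univ, card_univ, Fintype.card_coe,
    ← quarterPlaneWalks_eq_card] at h

lemma quarterPlaneWalks_succ_le : quarterPlaneWalks S (n + 1) ≤ #S * quarterPlaneWalks S n := by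
  rw [← card_isQuarterPlane_init, quarterPlaneWalks_eq_card]
  refine card_le_card fun f hf => ?_
  simp only [mem_filter, mem_univ, true_and] at hf ⊢
  exact ((isQuarterPlane_iff_init f).1 hf).1

lemma card_mul_quarterPlaneWalks_le :
    #S * quarterPlaneWalks S n ≤ quarterPlaneWalks S (n + 1) +
      #{f : Fin (n + 1) → S | ∑ j, (f j).1.1 < 0} +
      #{f : Fin (n + 1) → S | ∑ j, (f j).1.2 < 0} := by
  rw [← card_isQuarterPlane_init, quarterPlaneWalks_eq_card]
  refine (card_le_card fun f hf => ?_).trans <|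
    (card_union_le _ _).trans (Nat.add_le_add_right (card_union_le _ _) _)
  simp only [mem_union, mem_filter, mem_univ, true_and, isQuarterPlane_iff_init f] at hf ⊢
  have := le_or_gt 0 (∑ j, (f j).1.1)
  have := le_or_gt 0 (∑ j, (f j).1.2)
  tauto

lemma card_pow_le_quarterPlaneWalks_add :
    #S ^ n ≤ quarterPlaneWalks S n +
      #{f : Fin n → S | ExitsHalfLine (fun s : S => s.1.1) f} +
      #{f : Fin n → S | ExitsHalfLine (fun s : S => s.1.2) f} := by
  rw [quarterPlaneWalks_eq_card]
  calc #S ^ n = #(univ : Finset (Fin n → S)) := by simp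
    _ ≤ _ := card_le_card fun f _ => by
      simp only [mem_union, mem_filter, mem_univ, true_and]
      unfold IsQuarterPlane
      tauto
    _ ≤ _ := (card_union_le _ _).trans (Nat.add_le_add_right (card_union_le _ _) _)

variable {S}

lemma one_sub_two_div_mul_card_pow_le_quarterPlaneWalks (hx : ∀ p ∈ S, -1 ≤ p.1)
    (hy : ∀ p ∈ S, -1 ≤ p.2) {t : ℝ} (ht : 0 < t) (hsx : ∑ p ∈ S, t ^ (-p.1) ≤ #S)
    (hsy : ∑ p ∈ S, t ^ (-p.2) ≤ #S) :
    (1 - 2 / t) * #S ^ n ≤ quarterPlaneWalks S n := by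
  have hex := card_exitsHalfLine_mul_le (φ := fun s : S => s.1.1) (fun s => hx _ s.2) ht
    (by rwa [Fintype.card_coe, sum_coe_sort S fun p => t ^ (-p.1)]) n
  have hey := card_exitsHalfLine_mul_le (φ := fun s : S => s.1.2) (fun s => hy _ s.2) ht
    (by rwa [Fintype.card_coe, sum_coe_sort S fun p => t ^ (-p.2)]) n
  rw [Fintype.card_coe, ← le_div_iff₀ ht] at hex hey
  have hcount : (#S : ℝ) ^ n ≤ quarterPlaneWalks S n +
      #{f : Fin n → S | ExitsHalfLine (fun s : S => s.1.1) f} +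
      #{f : Fin n → S | ExitsHalfLine (fun s : S => s.1.2) f} := by
    exact_mod_cast card_pow_le_quarterPlaneWalks_add S n
  linarith [show (1 - 2 / t) * #S ^ n = (#S : ℝ) ^ n - 2 * ((#S : ℝ) ^ n / t) by ring]

lemma card_mul_quarterPlaneWalks_le_add_pow_div {t : ℝ} (ht : 1 ≤ t) :
    #S * (quarterPlaneWalks S n : ℝ) ≤ quarterPlaneWalks S (n + 1) +
      ((∑ p ∈ S, t ^ (-p.1)) ^ (n + 1) + (∑ p ∈ S, t ^ (-p.2)) ^ (n + 1)) / t := by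
  have hx := card_sum_neg_mul_le_pow (φ := fun s : S => s.1.1) ht (n + 1)
  have hy := card_sum_neg_mul_le_pow (φ := fun s : S => s.1.2) ht (n + 1)
  rw [sum_coe_sort S fun p => t ^ (-p.1), ← le_div_iff₀ (by positivity)] at hx
  rw [sum_coe_sort S fun p => t ^ (-p.2), ← le_div_iff₀ (by positivity)] at hy
  have hcount : (#S : ℝ) * quarterPlaneWalks S n ≤ quarterPlaneWalks S (n + 1) +
      #{f : Fin (n + 1) → S | ∑ j, (f j).1.1 < 0} +
      #{f : Fin (n + 1) → S | ∑ j, (f j).1.2 < 0} := by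
    exact_mod_cast card_mul_quarterPlaneWalks_le S n
  rw [add_div]
  linarith

end QuarterPlane

theorem exists_abs_sub_mul_pow_le {c : ℕ → ℝ} {d β A ε : ℝ} (hβ : 0 ≤ β) (hβd : β < d)
    (hsucc : ∀ n, c (n + 1) ≤ d * c n) (hstep : ∀ n, d * c n ≤ c (n + 1) + A * β ^ n)
    (hlow : ∀ n, ε * d ^ n ≤ c n) :
    ∃ κ, ε ≤ κ ∧ ∀ n, |c n - κ * d ^ n| ≤ A / (d - β) * β ^ n := by
  have hd : 0 < d := hβ.trans_lt hβd
  have hq : β / d < 1 := (div_lt_one hd).2 hβd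
  set p : ℕ → ℝ := fun n => c n / d ^ n with hp
  have hdist : ∀ n, dist (p n) (p (n + 1)) ≤ A / d * (β / d) ^ n := by
    intro n
    have hdiff : p n - p (n + 1) = (d * c n - c (n + 1)) / d ^ (n + 1) := by
      simp only [hp]; field_simp; ring
    rw [Real.dist_eq, hdiff, abs_of_nonneg (div_nonneg (by linarith [hsucc n]) (by positivity))]
    calc (d * c n - c (n + 1)) / d ^ (n + 1) ≤ A * β ^ n / d ^ (n + 1) := by
          gcongr; linarith [hstep n]
      _ = A / d * (β / d) ^ n := by rw [div_pow, pow_succ]; field_simp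
  obtain ⟨κ, hκ⟩ := cauchySeq_tendsto_of_complete (cauchySeq_of_le_geometric _ _ hq hdist)
  refine ⟨κ, ge_of_tendsto' hκ fun n => (le_div_iff₀ (by positivity)).2 (hlow n), fun n => ?_⟩
  have hlim := dist_le_of_le_geometric_of_tendsto _ _ hq hdist hκ n
  have hc : c n - κ * d ^ n = (p n - κ) * d ^ n := by simp only [hp]; field_simp
  rw [hc, abs_mul, abs_of_pos (by positivity : (0 : ℝ) < d ^ n), ← Real.dist_eq]
  calc dist (p n) κ * d ^ n ≤ A / d * (β / d) ^ n / (1 - β / d) * d ^ n := by gcongr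
    _ = A / (d - β) * β ^ n := by
      have : d - β ≠ 0 := by linarith
      rw [div_pow]
      field_simp

def stepsC : Finset (ℤ × ℤ) := {(-1, 1), (0, 1), (1, 1), (1, 0), (1, -1)}

lemma card_stepsC : #stepsC = 5 := rfl

lemma neg_one_le_fst_of_mem_stepsC : ∀ p ∈ stepsC, -1 ≤ p.1 := by decide

lemma neg_one_le_snd_of_mem_stepsC : ∀ p ∈ stepsC, -1 ≤ p.2 := by decide

lemma sum_stepsC (F : ℤ × ℤ → ℝ) :
    ∑ p ∈ stepsC, F p = F (-1, 1) + F (0, 1) + F (1, 1) + F (1, 0) + F (1, -1) := by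
  rw [stepsC, sum_insert (by decide), sum_insert (by decide), sum_insert (by decide),
    sum_insert (by decide), sum_singleton]
  ring

lemma sum_stepsC_zpow_neg_fst (t : ℝ) : ∑ p ∈ stepsC, t ^ (-p.1) = t + 1 + 3 * t⁻¹ := by
  rw [sum_stepsC]
  simp only [neg_neg, neg_zero, zpow_one, zpow_zero, zpow_neg]
  ring

lemma sum_stepsC_zpow_neg_snd (t : ℝ) : ∑ p ∈ stepsC, t ^ (-p.2) = t + 1 + 3 * t⁻¹ := by
  rw [sum_stepsC]
  simp only [neg_neg, neg_zero, zpow_one, zpow_zero, zpow_neg]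
  ring

end LatticeWalk

open LatticeWalk

theorem modelC_asymptotics :
    ∃ κ C : ℝ, 0 < κ ∧ 0 < C ∧ ∀ n : ℕ,
      |(quarterPlaneWalks ({(-1,1),(0,1),(1,1),(1,0),(1,-1)} : Finset (ℤ × ℤ)) n : ℝ) - κ * 5 ^ n| ≤
        C * (1 + 2 * Real.sqrt 3) ^ n := by
  set β := 1 + 2 * Real.sqrt 3
  have hsqrt3 : Real.sqrt 3 ^ 2 = 3 := Real.sq_sqrt (by norm_num)
  have hβ : Real.sqrt 3 + 1 + 3 * (Real.sqrt 3)⁻¹ = β := by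
    field_simp
    linarith
  have hβ5 : β < 5 := by nlinarith [Real.sqrt_nonneg 3]
  have hsucc (n : ℕ) : (quarterPlaneWalks stepsC (n + 1) : ℝ) ≤ 5 * quarterPlaneWalks stepsC n := by
    exact_mod_cast card_stepsC ▸ quarterPlaneWalks_succ_le stepsC n
  have hstep (n : ℕ) : 5 * (quarterPlaneWalks stepsC n : ℝ) ≤
      quarterPlaneWalks stepsC (n + 1) + 2 * β / Real.sqrt 3 * β ^ n := by
    have h := card_mul_quarterPlaneWalks_le_add_pow_div (S := stepsC) (n := n)
      (Real.one_le_sqrt.2 (by norm_num : (1 : ℝ) ≤ 3))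
    rw [sum_stepsC_zpow_neg_fst, sum_stepsC_zpow_neg_snd, hβ, card_stepsC, Nat.cast_ofNat] at h
    convert h using 2
    ring
  have hlow (n : ℕ) : 1 / 3 * 5 ^ n ≤ (quarterPlaneWalks stepsC n : ℝ) := by
    have h := one_sub_two_div_mul_card_pow_le_quarterPlaneWalks (n := n)
      neg_one_le_fst_of_mem_stepsC neg_one_le_snd_of_mem_stepsC (t := 3) (by norm_num)
      (by rw [sum_stepsC_zpow_neg_fst, card_stepsC]; norm_num)
      (by rw [sum_stepsC_zpow_neg_snd, card_stepsC]; norm_num)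
    rw [card_stepsC] at h
    norm_num at h ⊢
    linarith
  obtain ⟨κ, hκ, h⟩ := exists_abs_sub_mul_pow_le (by positivity) hβ5 hsucc hstep hlow
  exact ⟨κ, _, by linarith, div_pos (by positivity) (by linarith), h⟩
end

section
/- For every natural number n ≥ 1 and every complex number q with |q| = 1, q ≠ 1 and q ≠ −1, one has α_n(q) ≠ 0, where α_n(q) = q^{4n} + q^{2n+2} − 4q^{2n} + q^{2n−2} + 1. -/
/-! On the unit circle `z + z⁻¹ = 2 Re z ≤ 2`, with equality only at `z = 1`. Dividing `α_n(q)` by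
`q^{2n}` gives `(z + z⁻¹) + (w + w⁻¹) - 4` with `z = q^{2n}` and `w = q^2`, so a root on the unit
circle forces `q^2 = 1`. -/

/-- For `n = 0` the exponent `2 * n - 2` truncates to `0`. -/
def alpha {K : Type*} [Field K] (n : ℕ) (q : K) : K :=
  q ^ (4 * n) + q ^ (2 * n + 2) - 4 * q ^ (2 * n) + q ^ (2 * n - 2) + 1

lemma alpha_eq_mul {K : Type*} [Field K] {n : ℕ} (hn : 1 ≤ n) {q : K} (hq : q ≠ 0) :
    alpha n q = q ^ (2 * n) * (q ^ (2 * n) + (q ^ (2 * n))⁻¹ + (q ^ 2 + (q ^ 2)⁻¹) - 4) := by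
  obtain ⟨m, rfl⟩ := Nat.exists_eq_add_of_le' hn
  have hexp : 2 * (m + 1) - 2 = 2 * m := by omega
  rw [alpha, hexp]
  field_simp
  ring

namespace Complex

lemma add_inv_eq_two_mul_re {z : ℂ} (hz : ‖z‖ = 1) : z + z⁻¹ = 2 * z.re := by
  rw [inv_eq_conj hz, add_conj]
  push_cast
  ring

lemma eq_one_of_norm_eq_one_of_re_eq_one {z : ℂ} (hz : ‖z‖ = 1) (hre : z.re = 1) : z = 1 :=
  ext hre (abs_re_eq_norm.mp (by rw [hre, hz, abs_one]))

lemma eq_one_of_add_inv_add_add_inv_eq_four {z w : ℂ} (hz : ‖z‖ = 1) (hw : ‖w‖ = 1)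
    (h : z + z⁻¹ + (w + w⁻¹) = 4) : w = 1 := by
  rw [add_inv_eq_two_mul_re hz, add_inv_eq_two_mul_re hw] at h
  have hsum : z.re + w.re = 2 := by
    have := congrArg re h
    simp only [add_re, mul_re, re_ofNat, ofReal_re, im_ofNat, ofReal_im, mul_zero, sub_zero] at this
    linarith
  have hzre : z.re ≤ 1 := hz ▸ re_le_norm z
  have hwre : w.re ≤ 1 := hw ▸ re_le_norm w
  exact eq_one_of_norm_eq_one_of_re_eq_one hw (by linarith)

end Complex

theorem alpha_no_roots_on_unit_circle (n : ℕ) (hn : 1 ≤ n) (q : ℂ)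
    (hq : ‖q‖ = 1) (h1 : q ≠ 1) (h2 : q ≠ -1) :
    q ^ (4 * n) + q ^ (2 * n + 2) - 4 * q ^ (2 * n) + q ^ (2 * n - 2) + 1 ≠ 0 := by
  have hq0 : q ≠ 0 := norm_ne_zero_iff.mp (by rw [hq]; exact one_ne_zero)
  have hpow : ∀ k : ℕ, ‖q ^ k‖ = 1 := fun k => by rw [norm_pow, hq, one_pow]
  change alpha n q ≠ 0
  rw [alpha_eq_mul hn hq0, mul_ne_zero_iff, sub_ne_zero]
  refine ⟨pow_ne_zero _ hq0, fun h => ?_⟩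
  exact sq_ne_one_iff.mpr ⟨h1, h2⟩
    (Complex.eq_one_of_add_inv_add_add_inv_eq_four (hpow _) (hpow 2) h)
end

section
/- For every natural number n ≥ 1 and every complex number q with |q| = 1, q ≠ 1 and q ≠ −1, one has γ_n(q) ≠ 0, where γ_n(q) = q²(1+q²−q)(1+q^{4n}) + q(q²−3q+1)(q+1)²(q^n+q^{3n}) + q^{2n}(1−q²−4q+14q³−4q⁵−q⁴+q⁶). -/
/-!
Dividing by `q^(2n+3)` turns `γ_n(q)` into a polynomial in `c = q + q⁻¹` and `x = q^n + q^(-n)`.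
On the unit circle both are real, `c = 2 Re q ∈ (-2, 2)` because `q ≠ ±1`, and `x = 2 Re q^n ∈ [-2, 2]`;
on that box the reduced polynomial is strictly positive.
-/

def gammaSymm {R : Type*} [CommRing R] (c x : R) : R :=
  (c - 1) * (x ^ 2 - 2) + (c + 2) * (c - 3) * x + c ^ 3 - 4 * c ^ 2 - 4 * c + 22

theorem gammaSymm_pos {c x : ℝ} (hc : |c| < 2) (hx : |x| ≤ 2) : 0 < gammaSymm c x := by
  obtain ⟨hc₁, hc₂⟩ := abs_lt.mp hc
  obtain ⟨hx₁, hx₂⟩ := abs_le.mp hx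
  unfold gammaSymm
  rcases le_or_gt c 1 with hc | hc
  · nlinarith [mul_nonneg (mul_nonneg (sub_nonneg.mpr hx₂) (neg_le_iff_add_nonneg.mp hc₁.le))
        (show (0 : ℝ) ≤ 12 - 4 * c by linarith),
      mul_pos (neg_lt_iff_pos_add.mp hc₁) (mul_pos (sub_pos.mpr hc₂) (sub_pos.mpr hc₂)),
      mul_nonneg (sub_nonneg.mpr hc)
        (mul_nonneg (sub_nonneg.mpr hx₂) (neg_le_iff_add_nonneg.mp hx₁))]
  · nlinarith [mul_pos (neg_lt_iff_pos_add.mp hc₁) (mul_pos (sub_pos.mpr hc₂) (sub_pos.mpr hc₂)),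
      mul_nonneg (mul_nonneg (sub_nonneg.mpr hx₂) (sub_nonneg.mpr hc₂.le))
        (show (0 : ℝ) ≤ 5 + c by linarith),
      mul_nonneg (sub_nonneg.mpr hc.le) (sq_nonneg (2 - x))]

theorem Complex.ofReal_gammaSymm (c x : ℝ) :
    ((gammaSymm c x : ℝ) : ℂ) = gammaSymm (c : ℂ) (x : ℂ) := by
  simp only [gammaSymm]
  push_cast
  ring

theorem gamma_eq_mul_gammaSymm {K : Type*} [Field K] {q u : K} (hq : q ≠ 0) (hu : u ≠ 0) :
    q ^ 2 * (1 + q ^ 2 - q) * (1 + u ^ 4) + q * (q ^ 2 - 3 * q + 1) * (q + 1) ^ 2 * (u + u ^ 3) +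
        u ^ 2 * (1 - q ^ 2 - 4 * q + 14 * q ^ 3 - 4 * q ^ 5 - q ^ 4 + q ^ 6) =
      u ^ 2 * q ^ 3 * gammaSymm (q + q⁻¹) (u + u⁻¹) := by
  unfold gammaSymm
  field_simp
  ring

theorem Complex.add_inv_of_norm_eq_one {z : ℂ} (hz : ‖z‖ = 1) : z + z⁻¹ = (2 * z.re : ℝ) := by
  rw [Complex.inv_eq_conj hz, Complex.add_conj]

theorem Complex.abs_re_lt_one {z : ℂ} (hz : ‖z‖ = 1) (h₁ : z ≠ 1) (h₂ : z ≠ -1) : |z.re| < 1 := by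
  refine (hz ▸ Complex.abs_re_le_norm z).lt_of_ne fun h ↦ ?_
  have him : z.im = 0 := Complex.abs_re_eq_norm.mp (h.trans hz.symm)
  rcases abs_eq (zero_le_one' ℝ) |>.mp h with hre | hre
  · exact h₁ (Complex.ext hre him)
  · exact h₂ (Complex.ext hre (by simpa using him))

theorem gamma_no_roots_on_unit_circle_general (n : ℕ) (q : ℂ)
    (hq : ‖q‖ = 1) (h1 : q ≠ 1) (h2 : q ≠ -1) :
    q ^ 2 * (1 + q ^ 2 - q) * (1 + q ^ (4 * n)) +
      q * (q ^ 2 - 3 * q + 1) * (q + 1) ^ 2 * (q ^ n + q ^ (3 * n)) +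
      q ^ (2 * n) *
        (1 - q ^ 2 - 4 * q + 14 * q ^ 3 - 4 * q ^ 5 - q ^ 4 + q ^ 6) ≠ 0 := by
  have hq0 : q ≠ 0 := norm_ne_zero_iff.mp (hq ▸ one_ne_zero)
  have hqn : ‖q ^ n‖ = 1 := by rw [norm_pow, hq, one_pow]
  rw [pow_mul' q 4, pow_mul' q 3, pow_mul' q 2, gamma_eq_mul_gammaSymm hq0 (pow_ne_zero n hq0),
    Complex.add_inv_of_norm_eq_one hq, Complex.add_inv_of_norm_eq_one hqn,
    ← Complex.ofReal_gammaSymm]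
  refine mul_ne_zero (by simp [hq0]) (Complex.ofReal_ne_zero.mpr (gammaSymm_pos ?_ ?_).ne')
  · rw [abs_mul, abs_two]
    linarith [Complex.abs_re_lt_one hq h1 h2]
  · rw [abs_mul, abs_two]
    linarith [hqn ▸ Complex.abs_re_le_norm (q ^ n)]

theorem gamma_no_roots_on_unit_circle (n : ℕ) (hn : 1 ≤ n) (q : ℂ)
    (hq : ‖q‖ = 1) (h1 : q ≠ 1) (h2 : q ≠ -1) :
    q ^ 2 * (1 + q ^ 2 - q) * (1 + q ^ (4 * n)) +
      q * (q ^ 2 - 3 * q + 1) * (q + 1) ^ 2 * (q ^ n + q ^ (3 * n)) +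
      q ^ (2 * n) *
        (1 - q ^ 2 - 4 * q + 14 * q ^ 3 - 4 * q ^ 5 - q ^ 4 + q ^ 6) ≠ 0 :=
  gamma_no_roots_on_unit_circle_general n q hq h1 h2
end

section
/- For every natural number n ≥ 2 and every complex number q with |q| = 1 and q ≠ 1, if β_n(q) = 0 then |arg(q)| ≥ π − arccos(√2 − 1/2), where arg denotes the principal argument and β_n(q) = (q^{2n−1} + (q³−2q²−2q+1)q^{n−2} + 1)·(q^{2n+1} + (q³−2q²−2q+1)q^{n−1} + 1). -/
/-!
Write `q = e^{2it}` with `t = arg q / 2 ∈ (-π/2, π/2]`. Dividing a factor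
`q^(2k+3) + (q³ - 2q² - 2q + 1) q^k + 1` of `β_n` by `e^{(2k+3)it}` turns it into
`2 (cos((2k+3)t) + cos 3t - 2 cos t)`, so a root forces `5c - 4c³ = cos((2k+3)t) ≤ 1` for
`c = cos t ∈ [0, 1)`. Since `4c³ - 5c + 1 = (c - 1)(4c² + 4c - 1)`, this gives
`c ≤ (√2 - 1)/2`, i.e. `cos(arg q) = 2c² - 1 ≤ 1/2 - √2`.
-/

namespace Complex

theorem cos_nat_mul_eq_exp_pow (z : ℂ) (m : ℕ) :
    cos (m * z) = (exp (z * I) ^ m + (exp (z * I) ^ m)⁻¹) / 2 := by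
  rw [cos, ← exp_nat_mul, ← exp_neg]
  ring_nf

theorem cos_add_cos_eq_two_cos_of_root (z q : ℂ) (k : ℕ) (hq : q = exp (z * I) ^ 2)
    (hroot : q ^ (2 * k + 3) + (q ^ 3 - 2 * q ^ 2 - 2 * q + 1) * q ^ k + 1 = 0) :
    cos ((2 * k + 3 : ℕ) * z) + cos (3 * z) = 2 * cos z := by
  set u := exp (z * I)
  have hu : u ≠ 0 := exp_ne_zero _
  have hpalindromic : 2 * u ^ (2 * k + 3) *
      (cos ((2 * k + 3 : ℕ) * z) + cos (3 * z) - 2 * cos z) =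
        q ^ (2 * k + 3) + (q ^ 3 - 2 * q ^ 2 - 2 * q + 1) * q ^ k + 1 := by
    have h3 := cos_nat_mul_eq_exp_pow z 3
    have h1 := cos_nat_mul_eq_exp_pow z 1
    rw [Nat.cast_ofNat] at h3
    rw [Nat.cast_one, one_mul] at h1
    rw [cos_nat_mul_eq_exp_pow, h3, h1, hq]
    field_simp
    ring
  rw [hroot] at hpalindromic
  linear_combination (mul_eq_zero.mp hpalindromic).resolve_left (by simp [hu])

end Complex

open Real

theorem cos_two_mul_le_of_cos_add_cos (t : ℝ) (m : ℕ)
    (hc_nonneg : 0 ≤ cos t) (hc_lt_one : cos t < 1)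
    (h : cos (m * t) + cos (3 * t) = 2 * cos t) : cos (2 * t) ≤ 1 / 2 - √2 := by
  set c := cos t
  have hcubic : 5 * c - 4 * c ^ 3 ≤ 1 := by
    linarith [cos_le_one (m * t), cos_three_mul t]
  have hquad : 4 * c ^ 2 + 4 * c - 1 ≤ 0 := by nlinarith
  have hsqrt : √2 ^ 2 = 2 := sq_sqrt (by norm_num)
  have hc : c ≤ (√2 - 1) / 2 := by nlinarith [sqrt_nonneg 2]
  rw [cos_two_mul]
  nlinarith

theorem pi_sub_arccos_le_abs_of_cos_le (θ x : ℝ) (hθ : |θ| ≤ π) (h : cos θ ≤ -x) :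
    π - arccos x ≤ |θ| := by
  rw [← arccos_neg, ← arccos_cos (abs_nonneg θ) hθ]
  exact arccos_le_arccos (by rwa [cos_abs])

theorem cos_half_arg_nonneg (q : ℂ) : 0 ≤ cos (q.arg / 2) := by
  obtain ⟨hlo, hhi⟩ := abs_le.mp (Complex.abs_arg_le_pi q)
  exact cos_nonneg_of_neg_pi_div_two_le_of_le (by linarith) (by linarith)

theorem cos_half_arg_lt_one {q : ℂ} (hq : ‖q‖ = 1) (h1 : q ≠ 1) : cos (q.arg / 2) < 1 := by
  refine (cos_le_one _).lt_of_ne fun h => h1 ?_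
  have hbounds := abs_le.mp (Complex.abs_arg_le_pi q)
  have harg : q.arg = 0 := by
    have := (cos_eq_one_iff_of_lt_of_lt (by linarith [pi_pos]) (by linarith [pi_pos])).mp h
    linarith
  rw [← Complex.norm_mul_exp_arg_mul_I q, hq, harg]
  simp

theorem beta_roots_on_unit_circle_arg (n : ℕ) (hn : 2 ≤ n) (q : ℂ)
    (hq : ‖q‖ = 1) (h1 : q ≠ 1)
    (hroot :
      (q ^ (2 * n - 1) + (q ^ 3 - 2 * q ^ 2 - 2 * q + 1) * q ^ (n - 2) + 1) *
        (q ^ (2 * n + 1) + (q ^ 3 - 2 * q ^ 2 - 2 * q + 1) * q ^ (n - 1) + 1) = 0) :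
    |Complex.arg q| ≥ Real.pi - Real.arccos (Real.sqrt 2 - 1 / 2) := by
  set t := q.arg / 2
  have hqt : q = Complex.exp ((t : ℂ) * Complex.I) ^ 2 := by
    conv_lhs => rw [← Complex.norm_mul_exp_arg_mul_I q, hq]
    rw [← Complex.exp_nat_mul]
    push_cast [t]
    ring_nf
  obtain ⟨k, hk⟩ :
      ∃ k : ℕ, q ^ (2 * k + 3) + (q ^ 3 - 2 * q ^ 2 - 2 * q + 1) * q ^ k + 1 = 0 := by
    rcases mul_eq_zero.mp hroot with h | h
    · exact ⟨n - 2, by rwa [show 2 * (n - 2) + 3 = 2 * n - 1 by omega]⟩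
    · exact ⟨n - 1, by rwa [show 2 * (n - 1) + 3 = 2 * n + 1 by omega]⟩
  have hcos : cos ((2 * k + 3 : ℕ) * t) + cos (3 * t) = 2 * cos t := by
    exact_mod_cast Complex.cos_add_cos_eq_two_cos_of_root t q k hqt hk
  have hcos_arg := cos_two_mul_le_of_cos_add_cos t _
    (cos_half_arg_nonneg q) (cos_half_arg_lt_one hq h1) hcos
  rw [show 2 * t = q.arg by ring] at hcos_arg
  exact pi_sub_arccos_le_abs_of_cos_le _ _ (Complex.abs_arg_le_pi q) (by linarith)
end

section
/- Let q be a nonzero complex number with principal argument arg(q) ∈ (−π/2, −3π/8). Then q²·√((q⁴ − 6q² + 1)/q⁴) = −√(q⁴ − 6q² + 1), where √ denotes the principal branch of the complex square root (the branch whose value has nonnegative real part, with the standard branch cut along the negative real axis). -/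
/-!
Put `v = q²` and `A = q⁴ - 6q² + 1 = v² - 6v + 1`. Both `v · √(A / v²)` and `√A` square to `A`,
so they agree up to sign. The hypothesis on `arg q` puts `v` in the open third quadrant, which
makes `Im A = 2 Im v (Re v - 3)` positive, so `√A` lies in the open first quadrant. Then
`√A / v` has negative real part and cannot be the principal root `√(A / v²)`, which forces the
minus sign.
-/

open Complex Real

namespace Complex

theorem cpow_inv_two_re_pos {w : ℂ} (hw : w.im ≠ 0) : 0 < (w ^ (2⁻¹ : ℂ)).re := by
  rw [cpow_inv_two_re, Real.sqrt_pos]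
  linarith [abs_re_lt_norm.2 hw, neg_abs_le w.re]

theorem cpow_inv_two_im_pos {w : ℂ} (hw : 0 < w.im) : 0 < (w ^ (2⁻¹ : ℂ)).im := by
  rw [cpow_inv_two_im_eq_sqrt hw.le, Real.sqrt_pos]
  linarith [abs_re_lt_norm.2 hw.ne', le_abs_self w.re]

theorem mul_cpow_inv_two_div_sq_eq_neg {v w : ℂ} (hv : v ≠ 0)
    (h : (w ^ (2⁻¹ : ℂ) / v).re < 0) :
    v * (w / v ^ 2) ^ (2⁻¹ : ℂ) = -(w ^ (2⁻¹ : ℂ)) := by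
  have hsq : (v * (w / v ^ 2) ^ (2⁻¹ : ℂ)) ^ 2 = (w ^ (2⁻¹ : ℂ)) ^ 2 := by
    rw [mul_pow, cpow_ofNat_inv_pow, cpow_ofNat_inv_pow]
    field_simp
  refine (sq_eq_sq_iff_eq_or_eq_neg.1 hsq).resolve_left fun hplus => h.not_ge ?_
  have hroot : (w / v ^ 2) ^ (2⁻¹ : ℂ) = w ^ (2⁻¹ : ℂ) / v := by
    rw [← hplus]
    field_simp
  rw [← hroot, cpow_inv_two_re]
  exact Real.sqrt_nonneg _

theorem div_re_neg_of_re_pos_of_im_pos {z v : ℂ} (hz_re : 0 < z.re) (hz_im : 0 < z.im)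
    (hv_re : v.re < 0) (hv_im : v.im < 0) : (z / v).re < 0 := by
  have hv : 0 < normSq v := normSq_pos.2 fun h => by simp [h] at hv_re
  rw [div_re, ← add_div]
  exact div_neg_of_neg_of_pos (by nlinarith) hv

theorem sq_re_eq_norm_sq_mul_cos (q : ℂ) : (q ^ 2).re = ‖q‖ ^ 2 * Real.cos (2 * arg q) := by
  rw [Real.cos_two_mul', sq q, mul_re, ← norm_mul_cos_arg q, ← norm_mul_sin_arg q]
  ring

theorem sq_im_eq_norm_sq_mul_sin (q : ℂ) : (q ^ 2).im = ‖q‖ ^ 2 * Real.sin (2 * arg q) := by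
  rw [Real.sin_two_mul, sq q, mul_im, ← norm_mul_cos_arg q, ← norm_mul_sin_arg q]
  ring

theorem sq_re_neg_and_im_neg {q : ℂ} (h : arg q ∈ Set.Ioo (-(π / 2)) (-(π / 4))) :
    (q ^ 2).re < 0 ∧ (q ^ 2).im < 0 := by
  have hnorm : 0 < ‖q‖ ^ 2 := by
    refine pow_pos (norm_pos_iff.2 ?_) 2
    rintro rfl
    linarith [h.2, Real.pi_pos, arg_zero]
  rw [sq_re_eq_norm_sq_mul_cos, sq_im_eq_norm_sq_mul_sin, ← Real.cos_neg]
  obtain ⟨h₁, h₂⟩ := h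
  exact ⟨mul_neg_of_pos_of_neg hnorm
      (Real.cos_neg_of_pi_div_two_lt_of_lt (by linarith) (by linarith)),
    mul_neg_of_pos_of_neg hnorm (Real.sin_neg_of_neg_of_neg_pi_lt (by linarith) (by linarith))⟩

end Complex

theorem sqrt_branch_identity_general (q : ℂ)
    (harg : Complex.arg q ∈ Set.Ioo (-(Real.pi / 2)) (-(3 * Real.pi / 8))) :
    q ^ 2 * ((q ^ 4 - 6 * q ^ 2 + 1) / q ^ 4) ^ ((1 : ℂ) / 2) =
      -((q ^ 4 - 6 * q ^ 2 + 1) ^ ((1 : ℂ) / 2)) := by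
  obtain ⟨hv_re, hv_im⟩ :=
    sq_re_neg_and_im_neg ⟨harg.1, harg.2.trans (by linarith [Real.pi_pos])⟩
  set v := q ^ 2
  have hq4 : q ^ 4 = v ^ 2 := by ring
  have hA : 0 < (v ^ 2 - 6 * v + 1).im := by
    have him : (v ^ 2 - 6 * v + 1).im = 2 * v.im * (v.re - 3) := by
      simp only [sq, sub_im, add_im, mul_im, one_im, re_ofNat, im_ofNat]
      ring
    rw [him]
    exact mul_pos_of_neg_of_neg (by linarith) (by linarith)
  rw [hq4, one_div]
  exact mul_cpow_inv_two_div_sq_eq_neg (fun h => by simp [h] at hv_re)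
    (div_re_neg_of_re_pos_of_im_pos (cpow_inv_two_re_pos hA.ne') (cpow_inv_two_im_pos hA)
      hv_re hv_im)

theorem sqrt_branch_identity (q : ℂ) (hq : q ≠ 0)
    (harg : Complex.arg q ∈ Set.Ioo (-(Real.pi / 2)) (-(3 * Real.pi / 8))) :
    q ^ 2 * ((q ^ 4 - 6 * q ^ 2 + 1) / q ^ 4) ^ ((1 : ℂ) / 2) =
      -((q ^ 4 - 6 * q ^ 2 + 1) ^ ((1 : ℂ) / 2)) :=
  sqrt_branch_identity_general q harg
end

section
/- Let q be a complex number with q ≠ 0 and q² ≠ 1, let b₀ ∈ ℂ, and let a, b : ℕ → ℂ be sequences with a(0) = 1, b(0) = b₀, satisfying for all n ≥ 1 the coupled recurrences a(n) = (q + 1/q)·b(n−1) − a(n−1) − 1 and b(n) = (q + 1/q)·a(n) − b(n−1). Then for all n ≥ 0: a(n) = ( (q^{4n+3} − q^{4n+1} − q³ + q)·b₀ − 2q^{4n+2} + q^{4n} + 2q^{2n+2} + q⁴ − 2q² ) / ( q^{2n}·(q² − 1)² ) and b(n) = ( (q^{4n+4} − q^{4n+2} − q² + 1)·b₀ − 2q^{4n+3}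 + q^{4n+1} + q^{2n+3} + q^{2n+1} + q³ − 2q ) / ( q^{2n}·(q² − 1)² ). -/
/-!
The affine step `(a, b) ↦ (s b - a - 1, s (s b - a - 1) - b)` with `s = q + q⁻¹` has a linear part
of determinant `1` and trace `s² - 2 = q² + q⁻²`, so its eigenvalues are `q²` and `q⁻²`; since
`q² ≠ 1` it also has a unique fixed point `(2 q², q (q² + 1)) / (q² - 1)²`. Hence every solution is
that fixed point plus multiples of `q^{2n}` and `q^{-2n}`, which is the closed form once the two
multiples are matched to the initial values `(1, b₀)`. It then suffices to check that the closed
form satisfies the recurrence, because a solution is determined by its initial values.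
-/

theorem coupled_recurrence_unique {α : Type*} {f g : α → α → α} {a b a' b' : ℕ → α}
    (ha0 : a 0 = a' 0) (hb0 : b 0 = b' 0)
    (ha : ∀ n, a (n + 1) = f (a n) (b n)) (hb : ∀ n, b (n + 1) = g (a (n + 1)) (b n))
    (ha' : ∀ n, a' (n + 1) = f (a' n) (b' n)) (hb' : ∀ n, b' (n + 1) = g (a' (n + 1)) (b' n)) :
    ∀ n, a n = a' n ∧ b n = b' n
  | 0 => ⟨ha0, hb0⟩
  | n + 1 => by
    obtain ⟨hAn, hBn⟩ := coupled_recurrence_unique ha0 hb0 ha hb ha' hb' n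
    have hAsucc : a (n + 1) = a' (n + 1) := by rw [ha, ha', hAn, hBn]
    exact ⟨hAsucc, by rw [hb, hb', hAsucc, hBn]⟩

namespace CoupledRecurrence

variable {K : Type*} [Field K] (q b₀ : K)

def closedFormA (n : ℕ) : K :=
  ((q ^ (4 * n + 3) - q ^ (4 * n + 1) - q ^ 3 + q) * b₀ -
      2 * q ^ (4 * n + 2) + q ^ (4 * n) + 2 * q ^ (2 * n + 2) + q ^ 4 - 2 * q ^ 2) /
    (q ^ (2 * n) * (q ^ 2 - 1) ^ 2)

def closedFormB (n : ℕ) : K :=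
  ((q ^ (4 * n + 4) - q ^ (4 * n + 2) - q ^ 2 + 1) * b₀ -
      2 * q ^ (4 * n + 3) + q ^ (4 * n + 1) + q ^ (2 * n + 3) + q ^ (2 * n + 1) + q ^ 3 - 2 * q) /
    (q ^ (2 * n) * (q ^ 2 - 1) ^ 2)

variable {q}

theorem closedFormA_zero (hq2 : q ^ 2 ≠ 1) : closedFormA q b₀ 0 = 1 := by
  have hd : q ^ 2 - 1 ≠ 0 := sub_ne_zero.mpr hq2
  rw [closedFormA, div_eq_one_iff_eq (by simpa using hd)]
  ring

theorem closedFormB_zero (hq2 : q ^ 2 ≠ 1) : closedFormB q b₀ 0 = b₀ := by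
  have hd : q ^ 2 - 1 ≠ 0 := sub_ne_zero.mpr hq2
  rw [closedFormB, div_eq_iff (by simpa using hd)]
  ring

theorem closedFormA_succ (hq : q ≠ 0) (hq2 : q ^ 2 ≠ 1) (n : ℕ) :
    closedFormA q b₀ (n + 1) = (q + 1 / q) * closedFormB q b₀ n - closedFormA q b₀ n - 1 := by
  have hd : q ^ 2 - 1 ≠ 0 := sub_ne_zero.mpr hq2
  unfold closedFormA closedFormB
  field_simp
  ring

theorem closedFormB_succ (hq : q ≠ 0) (hq2 : q ^ 2 ≠ 1) (n : ℕ) :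
    closedFormB q b₀ (n + 1) = (q + 1 / q) * closedFormA q b₀ (n + 1) - closedFormB q b₀ n := by
  have hd : q ^ 2 - 1 ≠ 0 := sub_ne_zero.mpr hq2
  unfold closedFormA closedFormB
  field_simp
  ring

end CoupledRecurrence

open CoupledRecurrence in
theorem asymmetric_coupled_recurrence_closed_form (q : ℂ) (hq : q ≠ 0)
    (hq2 : q ^ 2 ≠ 1) (b₀ : ℂ) (a b : ℕ → ℂ) (ha0 : a 0 = 1) (hb0 : b 0 = b₀)
    (hreca : ∀ n : ℕ, a (n + 1) = (q + 1 / q) * b n - a n - 1)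
    (hrecb : ∀ n : ℕ, b (n + 1) = (q + 1 / q) * a (n + 1) - b n) :
    ∀ n : ℕ,
      a n = ((q ^ (4 * n + 3) - q ^ (4 * n + 1) - q ^ 3 + q) * b₀ -
            2 * q ^ (4 * n + 2) + q ^ (4 * n) + 2 * q ^ (2 * n + 2) +
            q ^ 4 - 2 * q ^ 2) /
          (q ^ (2 * n) * (q ^ 2 - 1) ^ 2) ∧
      b n = ((q ^ (4 * n + 4) - q ^ (4 * n + 2) - q ^ 2 + 1) * b₀ -
            2 * q ^ (4 * n + 3) + q ^ (4 * n + 1) + q ^ (2 * n + 3) +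
            q ^ (2 * n + 1) + q ^ 3 - 2 * q) /
          (q ^ (2 * n) * (q ^ 2 - 1) ^ 2) :=
  coupled_recurrence_unique (f := fun x y => (q + 1 / q) * y - x - 1)
    (g := fun x y => (q + 1 / q) * x - y) (ha0.trans (closedFormA_zero b₀ hq2).symm)
    (hb0.trans (closedFormB_zero b₀ hq2).symm) hreca hrecb
    (closedFormA_succ b₀ hq hq2) (closedFormB_succ b₀ hq hq2)
end

section
/- For every natural number n ≥ 1 there exists a real number r with 1 < r < 2 such that, writing R = r^n, 4R⁴r² + 4r² − 4R²r² + R⁴r⁴ + R⁴ + r⁴ + 1 + (r² + 1 − R⁴ − R⁴r²)·√(1 + 10r² + r⁴) = 0, where √ denotes the real square root. -/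
/-!
Treat `R = r ^ n` as an independent variable. At `r = R = 1` the expression equals `8`; at
`r = 2` we have `R = 2 ^ n ≥ 2`, and the bound `√57 ≥ 15 / 2` makes it negative. Since
`r ↦ χ̄(r ^ n, r)` is continuous, the intermediate value theorem gives a zero in `(1, 2)`.
-/

/-- The reciprocal kernel `χ̄_n(ri)` of the model `ℰ`, with `R` standing for `r ^ n`. -/
noncomputable def kernelReciprocal (R r : ℝ) : ℝ :=
  4 * R ^ 4 * r ^ 2 + 4 * r ^ 2 - 4 * R ^ 2 * r ^ 2 + R ^ 4 * r ^ 4 + R ^ 4 + r ^ 4 + 1 +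
    (r ^ 2 + 1 - R ^ 4 - R ^ 4 * r ^ 2) * Real.sqrt (1 + 10 * r ^ 2 + r ^ 4)

theorem kernelReciprocal_one_one : kernelReciprocal 1 1 = 8 := by
  norm_num [kernelReciprocal]

theorem kernelReciprocal_two_neg {R : ℝ} (hR : 2 ≤ R) : kernelReciprocal R 2 < 0 := by
  have hsqrt : (15 / 2 : ℝ) ≤ Real.sqrt 57 := Real.le_sqrt_of_sq_le (by norm_num)
  have hR2 : 4 ≤ R ^ 2 := by nlinarith
  have hR4 : 16 ≤ R ^ 4 := by nlinarith
  rw [kernelReciprocal, show (1 + 10 * 2 ^ 2 + 2 ^ 4 : ℝ) = 57 by norm_num]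
  nlinarith [mul_le_mul_of_nonneg_right hsqrt (sub_nonneg.2 hR4)]

theorem modelE_imaginary_pole (n : ℕ) (hn : 1 ≤ n) :
    ∃ r : ℝ, 1 < r ∧ r < 2 ∧
      4 * (r ^ n) ^ 4 * r ^ 2 + 4 * r ^ 2 - 4 * (r ^ n) ^ 2 * r ^ 2 +
          (r ^ n) ^ 4 * r ^ 4 + (r ^ n) ^ 4 + r ^ 4 + 1 +
          (r ^ 2 + 1 - (r ^ n) ^ 4 - (r ^ n) ^ 4 * r ^ 2) *
            Real.sqrt (1 + 10 * r ^ 2 + r ^ 4) = 0 := by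
  have hcont : ContinuousOn (fun r : ℝ => kernelReciprocal (r ^ n) r) (Set.Icc 1 2) := by
    unfold kernelReciprocal
    fun_prop
  have hneg : kernelReciprocal (2 ^ n) 2 < 0 :=
    kernelReciprocal_two_neg (le_self_pow₀ one_le_two (by omega))
  have hpos : kernelReciprocal (1 ^ n) 1 = 8 := by rw [one_pow, kernelReciprocal_one_one]
  obtain ⟨r, ⟨hr1, hr2⟩, hzero⟩ :=
    intermediate_value_Ioo' (by norm_num) hcont ⟨hneg, by rw [hpos]; norm_num⟩
  exact ⟨r, hr1, hr2, hzero⟩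
end
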